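/- arXiv:1703.05458 — 4 statements merged into one kernel-verified Lean document; each statement's English description precedes it below -/
import Mathlib

section
/- Let X be a nonempty set, m a positive integer, and f : X → ℝ^m a vector of objective functions. Fix an index l and bounds ε_i ∈ ℝ for all i ≠ l. Every minimizer x* of f_l over the feasible set F = {x ∈ X : f_i(x) ≤ ε_i for all i ≠ l} is weakly Pareto optimal for the multiobjective problem of minimizing f over X. -/
/-- **ε-constraint method: minimizers are weakly Pareto optimal.**
Let `X` be a nonempty set, `m` a positive integer, `f : X → ℝ^m` a vector of
objective functions, `l` a fixed index and `ε i` upper bounds for the other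
objectives.  Every minimizer `xstar` of `f · l` over the feasible set
`F = {x ∈ X | ∀ i ≠ l, f x i ≤ ε i}` is weakly Pareto optimal for the
multiobjective problem of minimizing `f` over `X`: there is no `x ∈ X` with
`f x i < f xstar i` for every `i`. -/
theorem eps_constraint_minimizer_weakly_pareto
    {α : Type*} (X : Set α) (hX : X.Nonempty) (m : ℕ) (hm : 0 < m)
    (f : α → Fin m → ℝ) (l : Fin m) (ε : Fin m → ℝ)
    (F : Set α) (hF : F = {x ∈ X | ∀ i, i ≠ l → f x i ≤ ε i})
    (xstar : α) (hxF : xstar ∈ F)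
    (hmin : ∀ x ∈ F, f xstar l ≤ f x l) :
    ¬ ∃ x ∈ X, ∀ i, f x i < f xstar i := by
  rintro ⟨x, hxX, hdom⟩
  subst hF
  have hxFmem : x ∈ {x ∈ X | ∀ i, i ≠ l → f x i ≤ ε i} :=
    ⟨hxX, fun i hi => (hdom i).le.trans (hxF.2 i hi)⟩
  exact absurd (hmin x hxFmem) (not_le.mpr (hdom l))
end

section
/- Let X be a nonempty convex subset of ℝ^n, m a positive integer, and f_1,…,f_m : X → ℝ convex functions. If x* ∈ X is Pareto optimal for the multiobjective problem of minimizing (f_1,…,f_m) over X, then there exist nonnegative weights w_1,…,w_m, not all zero, such that x* minimizes the weighted sum x ↦ Σ_{i=1}^m w_i f_i(x) over X. (This is the precise form of the statement that, for a problem with convex objectives, the weighted sum method can reach the entire Pareto optimal region.) -/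
/-- **For convex problems the weighted sum method reaches the whole Pareto
front.**  Let `X ⊆ ℝ^n` be nonempty and convex and `f i : X → ℝ` convex
functions.  If `xstar ∈ X` is Pareto optimal for minimizing `(f 1, …, f m)`
over `X`, then there exist nonnegative weights `w`, not all zero, such that
`xstar` minimizes `x ↦ ∑ i, w i * f i x` over `X`. -/
theorem pareto_implies_weighted_sum_minimizer
    {n : ℕ} (X : Set (Fin n → ℝ)) (hX : X.Nonempty) (hXc : Convex ℝ X)
    (m : ℕ) (hm : 0 < m) (f : Fin m → (Fin n → ℝ) → ℝ)
    (hconv : ∀ i, ConvexOn ℝ X (f i))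
    (xstar : Fin n → ℝ) (hx : xstar ∈ X)
    (hpareto : ¬ ∃ x ∈ X, (∀ i, f i x ≤ f i xstar) ∧ ∃ j, f j x < f j xstar) :
    ∃ w : Fin m → ℝ, (∀ i, 0 ≤ w i) ∧ w ≠ 0 ∧
      ∀ x ∈ X, ∑ i, w i * f i xstar ≤ ∑ i, w i * f i x := by
  classical
  -- A : attainable "excess" vectors; B : open negative orthant
  set A : Set (Fin m → ℝ) := {y | ∃ x ∈ X, ∀ i, f i x ≤ f i xstar + y i} with hA
  set B : Set (Fin m → ℝ) := {y | ∀ i, y i < 0} with hB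
  have hAconv : Convex ℝ A := by
    rintro y1 ⟨x1, hx1, h1⟩ y2 ⟨x2, hx2, h2⟩ a b ha hb hab
    refine ⟨a • x1 + b • x2, hXc hx1 hx2 ha hb hab, fun i => ?_⟩
    have hc := (hconv i).2 hx1 hx2 ha hb hab
    simp only [smul_eq_mul] at hc
    have e1 : a * f i x1 ≤ a * (f i xstar + y1 i) :=
      mul_le_mul_of_nonneg_left (h1 i) ha
    have e2 : b * f i x2 ≤ b * (f i xstar + y2 i) :=
      mul_le_mul_of_nonneg_left (h2 i) hb
    have : (a • y1 + b • y2) i = a * y1 i + b * y2 i := by simp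
    rw [this]
    have hsum : a * f i xstar + b * f i xstar = f i xstar := by
      rw [← add_mul, hab, one_mul]
    linarith
  have hBconv : Convex ℝ B := by
    rintro y1 h1 y2 h2 a b ha hb hab
    intro i
    have h1i := h1 i; have h2i := h2 i
    have : (a • y1 + b • y2) i = a * y1 i + b * y2 i := by simp
    rw [this]
    rcases eq_or_lt_of_le ha with ha' | ha'
    · have : b = 1 := by linarith
      nlinarith
    · nlinarith
  have hBopen : IsOpen B := by
    have : B = Set.pi Set.univ (fun _ : Fin m => Set.Iio (0 : ℝ)) := by
      ext y; simp [hB, Set.mem_pi]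
    rw [this]
    exact isOpen_set_pi Set.finite_univ (fun i _ => isOpen_Iio)
  have hdisj : Disjoint B A := by
    rw [Set.disjoint_left]
    rintro y hyB ⟨x, hxX, hle⟩
    exact hpareto ⟨x, hxX, fun i => le_of_lt (lt_of_le_of_lt (hle i)
      (by linarith [hyB i])), ⟨⟨0, hm⟩, lt_of_le_of_lt (hle ⟨0, hm⟩)
      (by linarith [hyB ⟨0, hm⟩])⟩⟩
  obtain ⟨φ, u, hBlt, hAge⟩ := geometric_hahn_banach_open hBconv hBopen hAconv hdisj
  set w : Fin m → ℝ := fun i => φ (fun j => if i = j then 1 else 0) with hw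
  have hφ : ∀ y : Fin m → ℝ, φ y = ∑ i, y i * w i := by
    intro y
    conv_lhs => rw [pi_eq_sum_univ y]
    rw [map_sum]
    simp [hw, smul_eq_mul]
  have hzeroA : (0 : Fin m → ℝ) ∈ A := ⟨xstar, hx, fun i => by simp⟩
  set s : ℝ := ∑ j, w j with hs
  -- value of φ on constant vectors
  have hconst : ∀ c : ℝ, φ (fun _ => c) = c * s := by
    intro c
    rw [hφ, hs, Finset.mul_sum]
  -- -s < u (from constant -1 ∈ B)
  have hneg1 : -s < u := by
    have := hBlt (fun _ => (-1 : ℝ)) (fun i => by norm_num)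
    rwa [hconst, neg_one_mul] at this
  -- weights are nonnegative
  have hwnn : ∀ i, 0 ≤ w i := by
    intro i
    by_contra hwi
    push_neg at hwi
    set t : ℝ := (u + s) / (-w i) with ht
    have ht0 : 0 < t := div_pos (by linarith) (by linarith)
    set y : Fin m → ℝ := fun j => if j = i then -1 - t else -1 with hy
    have hyB : y ∈ B := fun j => by
      simp only [hy]; split <;> linarith
    have hval : φ y = -s - t * w i := by
      rw [hφ]
      have : ∀ j, y j * w j = (-1) * w j + (if j = i then -t * w j else 0) := by
        intro j; simp only [hy]; split <;> ring
      simp_rw [this]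
      rw [Finset.sum_add_distrib, Finset.sum_ite_eq' Finset.univ i
        (fun j => -t * w j), if_pos (Finset.mem_univ i)]
      simp [hs, Finset.sum_neg_distrib]
      ring
    have hne : -w i ≠ 0 := ne_of_gt (by linarith)
    have htw : t * w i = -(u + s) := by
      rw [ht, div_mul_eq_mul_div, div_eq_iff hne]
      ring
    have := hBlt y hyB
    rw [hval, htw] at this
    linarith
  -- u is nonnegative
  have hu0 : 0 ≤ u := by
    by_contra hu
    push_neg at hu
    have hs0 : 0 < s := by
      by_contra hs0
      push_neg at hs0
      linarith
    have hεpos : (0 : ℝ) < -u / (2 * s) := div_pos (by linarith) (by linarith)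
    have := hBlt (fun _ => -(-u / (2 * s))) (fun i => by linarith)
    rw [hconst] at this
    have hval : -(-u / (2 * s)) * s = u / 2 := by field_simp
    rw [hval] at this
    linarith
  -- w ≠ 0
  have hwne : w ≠ 0 := by
    intro h0
    have h1 : φ 0 = 0 := map_zero φ
    have h2 := hAge 0 hzeroA
    rw [h1] at h2
    have h3 := hBlt (fun _ => (-1 : ℝ)) (fun i => by norm_num)
    rw [hconst] at h3
    have : s = 0 := by
      rw [hs]; simp [h0]
    rw [this] at h3
    simp at h3
    linarith
  refine ⟨w, hwnn, hwne, fun x hxX => ?_⟩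
  have hmemA : (fun i => f i x - f i xstar) ∈ A :=
    ⟨x, hxX, fun i => by simp⟩
  have := hAge _ hmemA
  rw [hφ] at this
  have hsum : ∑ i, (f i x - f i xstar) * w i
      = ∑ i, w i * f i x - ∑ i, w i * f i xstar := by
    rw [← Finset.sum_sub_distrib]
    exact Finset.sum_congr rfl (fun i _ => by ring)
  rw [hsum] at this
  linarith
end

section
/- Let X be a nonempty set, m a positive integer, f : X → ℝ^m a vector of objective functions, z ∈ ℝ^m a reference point satisfying z_i ≤ f_i(x) for all x ∈ X and all i, and w_1,…,w_m strictly positive weights. If x* ∈ X minimizes the weighted Chebyshev function x ↦ max_{1 ≤ i ≤ m} w_i (f_i(x) − z_i) over X, then x* is weakly Pareto optimal for the multiobjective problem of minimizing f over X. -/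
/-- **Weighted Chebyshev method yields weakly Pareto optimal points.**
Let `X` be a nonempty set, `m` a positive integer, `f : X → ℝ^m` objective
functions, `z` a reference point with `z i ≤ f x i` for all `x ∈ X` and all
`i`, and `w i > 0` weights.  If `xstar ∈ X` minimizes the weighted Chebyshev
function `x ↦ max_i (w i * (f x i - z i))` over `X`, then `xstar` is weakly
Pareto optimal for the multiobjective problem of minimizing `f` over `X`. -/
theorem chebyshev_minimizer_weakly_pareto
    {α : Type*} (X : Set α) (hX : X.Nonempty) (m : ℕ) (hm : 0 < m)
    (f : α → Fin m → ℝ) (z : Fin m → ℝ)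
    (hz : ∀ x ∈ X, ∀ i, z i ≤ f x i)
    (w : Fin m → ℝ) (hw : ∀ i, 0 < w i)
    (xstar : α) (hx : xstar ∈ X)
    (hmin : ∀ x ∈ X,
      (⨆ i, w i * (f xstar i - z i)) ≤ ⨆ i, w i * (f x i - z i)) :
    ¬ ∃ x ∈ X, ∀ i, f x i < f xstar i := by
  rintro ⟨x, hxX, hdom⟩
  haveI : Nonempty (Fin m) := ⟨⟨0, hm⟩⟩
  obtain ⟨j, hj⟩ := Finite.exists_max (fun i => w i * (f x i - z i))
  have hsup : (⨆ i, w i * (f x i - z i)) = w j * (f x j - z j) :=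
    le_antisymm (ciSup_le hj) (le_ciSup (Set.Finite.bddAbove (Set.finite_range (fun i => w i * (f x i - z i)))) j)
  have h1 : w j * (f x j - z j) < w j * (f xstar j - z j) := by
    have := hdom j
    nlinarith [hw j]
  have h2 : w j * (f xstar j - z j) ≤ ⨆ i, w i * (f xstar i - z i) :=
    le_ciSup (Set.Finite.bddAbove (Set.finite_range (fun i => w i * (f xstar i - z i)))) j
  have := hmin x hxX
  linarith [hsup ▸ this]
end

section
/- Let X be a nonempty set, m a positive integer, f : X → ℝ^m a vector of objective functions, and z ∈ ℝ^m a utopian reference point satisfying z_i < f_i(x) for all x ∈ X and all i. If x* ∈ X is Pareto optimal for the multiobjective problem of minimizing f over X, then with the strictly positive weights w_i = 1/(f_i(x*) − z_i), the point x* minimizes the weighted Chebyshev function x ↦ max_{1 ≤ i ≤ m} w_i (f_i(x) − z_i) over X. (This is the precise form of the statement that the Chebyshev method can obtain solutions in both convex and nonconvex regions of the Pareto front.) -/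
/-- **Any Pareto optimal point solves a weighted Chebyshev problem.**
Let `X` be a nonempty set, `m` a positive integer, `f : X → ℝ^m` objective
functions and `z` a utopian reference point with `z i < f x i` for all `x ∈ X`
and all `i`.  If `xstar ∈ X` is Pareto optimal for minimizing `f` over `X`,
then with the strictly positive weights `w i = 1 / (f xstar i - z i)` the point
`xstar` minimizes the weighted Chebyshev function
`x ↦ max_i (w i * (f x i - z i))` over `X`. -/
theorem pareto_minimizes_weighted_chebyshev
    {α : Type*} (X : Set α) (hX : X.Nonempty) (m : ℕ) (hm : 0 < m)
    (f : α → Fin m → ℝ) (z : Fin m → ℝ)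
    (hz : ∀ x ∈ X, ∀ i, z i < f x i)
    (xstar : α) (hx : xstar ∈ X)
    (hpareto : ¬ ∃ x ∈ X, (∀ i, f x i ≤ f xstar i) ∧ ∃ j, f x j < f xstar j)
    (w : Fin m → ℝ) (hw : w = fun i => 1 / (f xstar i - z i)) :
    ∀ x ∈ X,
      (⨆ i, w i * (f xstar i - z i)) ≤ ⨆ i, w i * (f x i - z i) := by
  intro x hxX
  haveI : Nonempty (Fin m) := ⟨⟨0, hm⟩⟩
  have hpos : ∀ i, 0 < f xstar i - z i := fun i => sub_pos.2 (hz _ hx i)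
  have hone : ∀ i, w i * (f xstar i - z i) = 1 := by
    intro i
    rw [hw]
    field_simp [ne_of_gt (hpos i)]
  have hsup1 : (⨆ i, w i * (f xstar i - z i)) = 1 := by
    simp only [hone, ciSup_const]
  rw [hsup1]
  by_contra hlt
  push_neg at hlt
  have hbdd : BddAbove (Set.range fun i => w i * (f x i - z i)) :=
    (Set.finite_range _).bddAbove
  have hall : ∀ i, f x i < f xstar i := by
    intro i
    have h1 : w i * (f x i - z i) ≤ ⨆ i, w i * (f x i - z i) := le_ciSup hbdd i
    have h2 : w i * (f x i - z i) < 1 := lt_of_le_of_lt h1 hlt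
    rw [hw] at h2
    have hne : f xstar i - z i ≠ 0 := ne_of_gt (hpos i)
    rw [div_mul_eq_mul_div, one_mul, div_lt_one (hpos i)] at h2
    linarith
  exact hpareto ⟨x, hxX, fun i => (hall i).le, ⟨⟨0, hm⟩, hall _⟩⟩
end
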